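/- Flows preserve flatness (Lemma 2.1): let A be a Banach DGLA over ℝ, let e ∈ A_0, and let x : ℝ → A_{−1} be a differentiable curve satisfying x'(t) = ∂e − [e, x(t)] for all t ∈ ℝ. If x(0) satisfies the Maurer–Cartan equation ∂x(0) + (1/2)[x(0), x(0)] = 0, then x(t) satisfies the Maurer–Cartan equation for every t ∈ ℝ. -/

import Mathlib

/-!
Along the flow `x' = ∂e − [e, x]` the curvature `κ(t) = ∂x(t) + ½[x(t), x(t)]` satisfies the
linear equation `κ' = −[e, κ]`: differentiating gives `∂∂e − ∂[e, x] + [∂e, x] − [[e, x], x]`,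
and `∂² = 0`, the Leibniz rule and the fact that `ad_e` is a derivation (Jacobi, `e` of degree
`0`) turn this into `−[e, ∂x] − ½[e, [x, x]]`. Since `ad_e` is bounded, uniqueness for linear ODEs
forces `κ ≡ 0` once `κ(0) = 0`.
-/

/-- A Banach DGLA over `ℝ`: a differential graded Lie algebra whose underlying space is a
Banach space, each graded piece `Aₙ` a closed subspace, with a continuous bilinear bracket
respecting the grading (with graded antisymmetry and graded Jacobi identity) and a bounded
differential `∂` of degree `-1` with `∂ ∘ ∂ = 0` satisfying the graded Leibniz rule. -/
class BanachDGLA (A : Type*) [NormedAddCommGroup A] [NormedSpace ℝ A] [CompleteSpace A] where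
  bracket : A →L[ℝ] A →L[ℝ] A
  grading : ℤ → Submodule ℝ A
  closed_grading : ∀ n, IsClosed (grading n : Set A)
  isInternal : DirectSum.IsInternal grading
  bracket_mem : ∀ (m n : ℤ) (a b : A), a ∈ grading m → b ∈ grading n →
    bracket a b ∈ grading (m + n)
  bracket_antisymm : ∀ (m n : ℤ) (a b : A), a ∈ grading m → b ∈ grading n →
    bracket b a = -(((-1 : ℝ) ^ (m * n)) • bracket a b)
  jacobi : ∀ (l m n : ℤ) (a b c : A), a ∈ grading l → b ∈ grading m → c ∈ grading n →
    ((-1 : ℝ) ^ (l * m)) • bracket (bracket b c) a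
      + ((-1 : ℝ) ^ (m * n)) • bracket (bracket c a) b
      + ((-1 : ℝ) ^ (n * l)) • bracket (bracket a b) c = 0
  d : A →L[ℝ] A
  d_mem : ∀ (n : ℤ) (a : A), a ∈ grading n → d a ∈ grading (n - 1)
  d_sq : ∀ a : A, d (d a) = 0
  leibniz : ∀ (m : ℤ) (a b : A), a ∈ grading m →
    d (bracket a b) = bracket (d a) b + ((-1 : ℝ) ^ m) • bracket a (d b)

namespace BanachDGLA

variable {A : Type*} [NormedAddCommGroup A] [NormedSpace ℝ A] [CompleteSpace A] [BanachDGLA A]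

/-- The differential `∂` of the Banach DGLA. -/
noncomputable def D : A →L[ℝ] A := BanachDGLA.d

/-- The bracket `[x, y]` of the Banach DGLA. -/
noncomputable def br (x y : A) : A := BanachDGLA.bracket x y

/-- The `n`-th graded piece `Aₙ`. -/
noncomputable def gr (n : ℤ) : Submodule ℝ A := BanachDGLA.grading n

/-- The adjoint operator `ad_x = [x, ·]`, a bounded operator. -/
noncomputable def ad (x : A) : A →L[ℝ] A := BanachDGLA.bracket x

/-- The curvature `κ(a) = ∂a + (1/2)[a,a]`. -/
noncomputable def curv (a : A) : A := D a + (2⁻¹ : ℝ) • br a a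

end BanachDGLA

theorem eq_zero_of_hasDerivAt_clm_apply {E : Type*} [NormedAddCommGroup E] [NormedSpace ℝ E]
    (L : E →L[ℝ] E) {f : ℝ → E} (hf : ∀ t, HasDerivAt f (L (f t)) t) {t₀ : ℝ}
    (hf₀ : f t₀ = 0) : f = 0 :=
  ODE_solution_unique_univ (v := fun _ => L) (s := fun _ => Set.univ)
    (fun _ => L.lipschitz.lipschitzOnWith) (fun t => ⟨hf t, Set.mem_univ _⟩)
    (fun t => ⟨by simp, Set.mem_univ _⟩) hf₀

namespace BanachDGLA

variable {A : Type*} [NormedAddCommGroup A] [NormedSpace ℝ A] [CompleteSpace A] [BanachDGLA A]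

theorem D_mem_gr {n : ℤ} {a : A} (ha : a ∈ gr n) : D a ∈ gr (n - 1) := d_mem n a ha

theorem br_mem_gr {m n : ℤ} {a b : A} (ha : a ∈ gr m) (hb : b ∈ gr n) :
    br a b ∈ gr (m + n) :=
  bracket_mem m n a b ha hb

theorem br_swap {m n : ℤ} {a b : A} (ha : a ∈ gr m) (hb : b ∈ gr n) :
    br b a = -(((-1 : ℝ) ^ (m * n)) • br a b) :=
  bracket_antisymm m n a b ha hb

theorem br_swap_of_mem_gr_zero {n : ℤ} {e b : A} (he : e ∈ gr 0) (hb : b ∈ gr n) :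
    br b e = -br e b := by
  simpa using br_swap he hb

theorem br_comm_of_odd {m n : ℤ} (hm : Odd m) (hn : Odd n) {a b : A} (ha : a ∈ gr m)
    (hb : b ∈ gr n) : br b a = br a b := by
  simpa [(hm.mul hn).neg_one_zpow] using br_swap ha hb

theorem D_br_of_mem_gr_zero {e : A} (he : e ∈ gr 0) (b : A) :
    D (br e b) = br (D e) b + br e (D b) := by
  simpa [D, br] using leibniz 0 e b he

theorem br_br_of_mem_gr_zero {l n : ℤ} {e a b : A} (he : e ∈ gr 0) (ha : a ∈ gr l)
    (hb : b ∈ gr n) : br e (br a b) = br (br e a) b + br a (br e b) := by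
  have heb : br e b ∈ gr n := by simpa using br_mem_gr he hb
  set s : ℝ := (-1) ^ (l * n) with hs_def
  have hs : s * s = 1 := by rw [hs_def, ← zpow_add₀ (by norm_num), Even.neg_one_zpow ⟨_, rfl⟩]
  -- Jacobi for `(a, e, b)`; the remaining sign `s = ±1` is cancelled by multiplying by `s`.
  have jac := jacobi l 0 n a e b ha he hb
  simp only [mul_zero, zero_mul, zpow_zero, one_smul] at jac
  change br (br e b) a + br (br b a) e + (-1 : ℝ) ^ (n * l) • br (br a e) b = 0 at jac
  rw [br_swap ha heb, br_swap_of_mem_gr_zero he (br_mem_gr hb ha), br_swap ha hb,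
    br_swap_of_mem_gr_zero he ha, mul_comm n l, ← hs_def] at jac
  simp only [br, map_neg, map_smul, neg_apply] at jac ⊢
  have hjac := congrArg (s • ·) jac
  simp only [smul_add, smul_neg, smul_smul, hs, one_smul, smul_zero] at hjac
  linear_combination (norm := module) hjac

theorem br_br_self_of_odd {m : ℤ} (hm : Odd m) {e a : A} (he : e ∈ gr 0) (ha : a ∈ gr m) :
    br e (br a a) = (2 : ℝ) • br (br e a) a := by
  have hea : br e a ∈ gr m := by simpa using br_mem_gr he ha
  rw [br_br_of_mem_gr_zero he ha ha, br_comm_of_odd hm hm hea ha, two_smul]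

theorem hasDerivAt_curv {x : ℝ → A} {v : A} {t : ℝ} (hx : HasDerivAt x v t) :
    HasDerivAt (fun s => curv (x s)) (D v + (2⁻¹ : ℝ) • (br v (x t) + br (x t) v)) t := by
  have hD : HasDerivAt (fun s => D (x s)) (D v) t :=
    (D : A →L[ℝ] A).hasFDerivAt.comp_hasDerivAt t hx
  have hbr : HasDerivAt (fun s => br (x s) (x s)) (br v (x t) + br (x t) v) t :=
    ((bracket : A →L[ℝ] A →L[ℝ] A).hasFDerivAt.comp_hasDerivAt t hx).clm_apply hx
  exact hD.add (hbr.const_smul (2⁻¹ : ℝ))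

theorem curv_variation_gauge_eq_neg_ad_curv {e a : A} (he : e ∈ gr 0) (ha : a ∈ gr (-1)) :
    D (D e - br e a) + (2⁻¹ : ℝ) • (br (D e - br e a) a + br a (D e - br e a))
      = -ad e (curv a) := by
  have hv : D e - br e a ∈ gr (-1) :=
    Submodule.sub_mem _ (by simpa using D_mem_gr he) (by simpa using br_mem_gr he ha)
  have hDD : D (D e) = 0 := d_sq e
  have hsub : br (D e - br e a) a = br (D e) a - br (br e a) a := by simp [br]
  have hcurv : ad e (curv a) = br e (D a) + (2⁻¹ : ℝ) • br e (br a a) := by simp [ad, curv, br]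
  rw [br_comm_of_odd odd_neg_one odd_neg_one hv ha, map_sub, hDD, D_br_of_mem_gr_zero he a,
    hsub, hcurv, br_br_self_of_odd odd_neg_one he ha]
  module

theorem hasDerivAt_curv_of_gauge_flow {e : A} (he : e ∈ gr 0) {x : ℝ → A} {t : ℝ}
    (hxt : x t ∈ gr (-1)) (hflow : HasDerivAt x (D e - br e (x t)) t) :
    HasDerivAt (fun s => curv (x s)) (-ad e (curv (x t))) t :=
  (hasDerivAt_curv hflow).congr_deriv (curv_variation_gauge_eq_neg_ad_curv he hxt)

end BanachDGLA

open BanachDGLA in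
/-- flows preserve flatness (Lemma 2.1). In a Banach DGLA over `ℝ`, if `e ∈ A₀`
and `x : ℝ → A₋₁` is a differentiable curve satisfying the flow equation
`x'(t) = ∂e − [e, x(t)]`, and `x(0)` satisfies the Maurer–Cartan equation
`∂x(0) + (1/2)[x(0), x(0)] = 0`, then `x(t)` satisfies the Maurer–Cartan equation for
every `t ∈ ℝ`. -/
theorem flow_preserves_flatness {A : Type*} [NormedAddCommGroup A] [NormedSpace ℝ A]
    [CompleteSpace A] [BanachDGLA A]
    (e : A) (he : e ∈ gr 0) (x : ℝ → A) (hx : ∀ t, x t ∈ gr (-1))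
    (hflow : ∀ t : ℝ, HasDerivAt x (D e - br e (x t)) t)
    (h0 : D (x 0) + (2⁻¹ : ℝ) • br (x 0) (x 0) = 0) :
    ∀ t : ℝ, D (x t) + (2⁻¹ : ℝ) • br (x t) (x t) = 0 := by
  have hcurv : (fun t => curv (x t)) = 0 :=
    eq_zero_of_hasDerivAt_clm_apply (-ad e)
      (fun t => hasDerivAt_curv_of_gauge_flow he (hx t) (hflow t)) h0
  exact congrFun hcurv
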